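/- arXiv:0903.4555 — 2 statements merged into one kernel-verified Lean document; each statement's English description precedes it below -/
import Mathlib

section
/- For 1 ≤ p < ∞ and s > 0, the map h_p^(s) : ℓ^p → ℓ^p is continuous. -/
/-!
Each coordinate of `h_p^(s)(x)` depends continuously on `x`: the tails `∑_{k ≥ n} |x_k|^p` are
`‖x‖^p` minus finitely many continuous terms, and at a point where `x_n = 0` the modulus of the
`n`-th output coordinate is a continuous function of `x` vanishing there. The `p`-th powers of
these moduli telescope, so `‖h_p^(s)(x)‖ = ‖x‖^s` is continuous as well. Finally, in `ℓ^p` with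
`p < ∞` coordinatewise convergence together with convergence of the norms forces norm
convergence: outside a large finite set of coordinates the limit carries little mass, and by
convergence of the norms so does the sequence, eventually.
-/

open scoped ENNReal

noncomputable def lpTail (p : ℝ≥0∞) (x : ℕ → ℂ) (n : ℕ) : ℝ :=
  ∑' k : ℕ, ‖x (n + k)‖ ^ p.toReal

noncomputable def hMap (p : ℝ≥0∞) (s : ℝ) (x : ℕ → ℂ) (n : ℕ) : ℂ :=
  if x n = 0 then 0
  else (x n / ‖x n‖) *
    ((((lpTail p x n) ^ s - (lpTail p x (n + 1)) ^ s) ^ (1 / p.toReal) : ℝ) : ℂ)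

open Filter Topology

lemma ENNReal.one_le_toReal {p : ℝ≥0∞} (h : 1 ≤ p) (hp : p ≠ ∞) : 1 ≤ p.toReal := by
  simpa using ENNReal.toReal_mono hp h

lemma norm_sub_rpow_le {E : Type*} [SeminormedAddCommGroup E] {q : ℝ} (hq : 1 ≤ q) (a b : E) :
    ‖a - b‖ ^ q ≤ 2 ^ (q - 1) * (‖a‖ ^ q + ‖b‖ ^ q) := by
  have h := NNReal.rpow_add_le_mul_rpow_add_rpow ‖a‖₊ ‖b‖₊ hq
  have h' : ‖a - b‖ ^ q ≤ (‖a‖ + ‖b‖) ^ q :=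
    Real.rpow_le_rpow (norm_nonneg _) (norm_sub_le a b) (by linarith)
  exact h'.trans (by exact_mod_cast h)

namespace lp

variable {α : Type*} {E : α → Type*} [∀ i, NormedAddCommGroup (E i)] {p : ℝ≥0∞}

lemma tsum_compl_norm_rpow (hp : 0 < p.toReal) (x : lp E p) (F : Finset α) :
    ∑' i : ↑(↑F : Set α)ᶜ, ‖x i‖ ^ p.toReal = ‖x‖ ^ p.toReal - ∑ i ∈ F, ‖x i‖ ^ p.toReal := by
  rw [(hasSum_norm hp x).tsum_eq.symm, ← (hasSum_norm hp x).summable.sum_add_tsum_compl (s := F)]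
  ring

lemma norm_sub_rpow_le_sum_add_tails (hp : 1 ≤ p.toReal) (x y : lp E p) (F : Finset α) :
    ‖x - y‖ ^ p.toReal ≤ ∑ i ∈ F, ‖x i - y i‖ ^ p.toReal + 2 ^ (p.toReal - 1) *
      ((‖x‖ ^ p.toReal - ∑ i ∈ F, ‖x i‖ ^ p.toReal) +
        (‖y‖ ^ p.toReal - ∑ i ∈ F, ‖y i‖ ^ p.toReal)) := by
  have hp₀ : 0 < p.toReal := one_pos.trans_le hp
  have hsum (z : lp E p) : Summable fun i : ↑(↑F : Set α)ᶜ => ‖z i‖ ^ p.toReal :=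
    (F.summable_compl_iff).2 (hasSum_norm hp₀ z).summable
  rw [← tsum_compl_norm_rpow hp₀, ← tsum_compl_norm_rpow hp₀,
    ← (hsum x).tsum_add (hsum y), ← ((hsum x).add (hsum y)).tsum_mul_left,
    ← (hasSum_norm hp₀ (x - y)).tsum_eq,
    ← (hasSum_norm hp₀ (x - y)).summable.sum_add_tsum_compl (s := F)]
  refine add_le_add (by simp only [coeFn_sub, Pi.sub_apply, le_refl])
    ((hsum (x - y)).tsum_le_tsum (fun i => ?_) (((hsum x).add (hsum y)).mul_left _))
  simpa only [coeFn_sub, Pi.sub_apply] using norm_sub_rpow_le hp (x i) (y i)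

theorem tendsto_of_tendsto_apply_of_tendsto_norm [Fact (1 ≤ p)] (hp : p ≠ ∞) {ι : Type*}
    {l : Filter ι} {f : ι → lp E p} {g : lp E p} (hf : ∀ i, Tendsto (fun k => f k i) l (𝓝 (g i)))
    (hn : Tendsto (fun k => ‖f k‖) l (𝓝 ‖g‖)) : Tendsto f l (𝓝 g) := by
  have hq := ENNReal.one_le_toReal Fact.out hp
  have hq₀ : 0 < p.toReal := one_pos.trans_le hq
  let tail (z : lp E p) (F : Finset α) : ℝ := ‖z‖ ^ p.toReal - ∑ i ∈ F, ‖z i‖ ^ p.toReal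
  suffices h : Tendsto (fun k => ‖f k - g‖ ^ p.toReal) l (𝓝 0) by
    rw [tendsto_iff_norm_sub_tendsto_zero]
    simpa [← Real.rpow_mul (norm_nonneg _), mul_inv_cancel₀ hq₀.ne',
      Real.zero_rpow (inv_ne_zero hq₀.ne')] using
      h.rpow_const (p := p.toReal⁻¹) (.inr (by positivity))
  refine tendsto_order.2
    ⟨fun a ha => .of_forall fun k => ha.trans_le (by positivity), fun ε hε => ?_⟩
  have htail : Tendsto (tail g) atTop (𝓝 0) := by
    simpa [tail] using (tendsto_const_nhds (x := ‖g‖ ^ p.toReal)).sub (hasSum_norm hq₀ g)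
  obtain ⟨F, hF⟩ := (((htail.add htail).const_mul (2 ^ (p.toReal - 1))).eventually
    (gt_mem_nhds (by simpa using hε))).exists
  have hhead : Tendsto (fun k => ∑ i ∈ F, ‖f k i - g i‖ ^ p.toReal) l (𝓝 0) := by
    simpa [Real.zero_rpow hq₀.ne'] using
      tendsto_finsetSum F fun i _ => ((hf i).sub_const (g i)).norm.rpow_const (.inr hq₀.le)
  have htail_f : Tendsto (fun k => tail (f k) F) l (𝓝 (tail g F)) :=
    (hn.rpow_const (.inr hq₀.le)).sub
      (tendsto_finsetSum F fun i _ => (hf i).norm.rpow_const (.inr hq₀.le))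
  have hbound := hhead.add ((htail_f.add_const (tail g F)).const_mul (2 ^ (p.toReal - 1)))
  rw [zero_add] at hbound
  filter_upwards [hbound.eventually (gt_mem_nhds hF)] with k hk
  exact (norm_sub_rpow_le_sum_add_tails hq (f k) g F).trans_lt hk

theorem continuous_of_continuous_apply_of_continuous_norm [Fact (1 ≤ p)] (hp : p ≠ ∞)
    {X : Type*} [TopologicalSpace X] {f : X → lp E p} (hf : ∀ i, Continuous fun x => f x i)
    (hn : Continuous fun x => ‖f x‖) : Continuous f :=
  continuous_iff_continuousAt.2 fun _ =>
    tendsto_of_tendsto_apply_of_tendsto_norm hp (fun i => (hf i).continuousAt) hn.continuousAt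

end lp

section lpTail

lemma lpTail_nonneg (p : ℝ≥0∞) (x : ℕ → ℂ) (n : ℕ) : 0 ≤ lpTail p x n :=
  tsum_nonneg fun _ => by positivity

lemma lpTail_zero (p : ℝ≥0∞) (x : ℕ → ℂ) : lpTail p x 0 = ∑' k, ‖x k‖ ^ p.toReal := by
  simp [lpTail]

lemma tendsto_lpTail_atTop (p : ℝ≥0∞) (x : ℕ → ℂ) : Tendsto (lpTail p x) atTop (𝓝 0) := by
  unfold lpTail
  simpa only [add_comm] using tendsto_sum_nat_add fun k => ‖x k‖ ^ p.toReal

-- `0 / ‖0‖ = 0`, so the case split in `hMap` is immaterial.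
lemma hMap_eq (p : ℝ≥0∞) (s : ℝ) (x : ℕ → ℂ) (n : ℕ) : hMap p s x n = (x n / ‖x n‖) *
    (((lpTail p x n ^ s - lpTail p x (n + 1) ^ s) ^ (1 / p.toReal) : ℝ) : ℂ) := by
  by_cases h : x n = 0 <;> simp [hMap, h]

variable {p : ℝ≥0∞} {s : ℝ} {x : ℕ → ℂ}

lemma lpTail_eq_tsum_sub_sum (hx : Summable fun k => ‖x k‖ ^ p.toReal) (n : ℕ) :
    lpTail p x n = ∑' k, ‖x k‖ ^ p.toReal - ∑ k ∈ Finset.range n, ‖x k‖ ^ p.toReal := by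
  rw [← hx.sum_add_tsum_nat_add n, lpTail]
  simp [add_comm]

lemma lpTail_eq_add_lpTail_succ (hx : Summable fun k => ‖x k‖ ^ p.toReal) (n : ℕ) :
    lpTail p x n = ‖x n‖ ^ p.toReal + lpTail p x (n + 1) := by
  rw [lpTail_eq_tsum_sub_sum hx, lpTail_eq_tsum_sub_sum hx, Finset.sum_range_succ]
  ring

lemma lpTail_succ_rpow_le (hs : 0 ≤ s) (hx : Summable fun k => ‖x k‖ ^ p.toReal) (n : ℕ) :
    lpTail p x (n + 1) ^ s ≤ lpTail p x n ^ s := by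
  rw [lpTail_eq_add_lpTail_succ hx n]
  gcongr
  · exact lpTail_nonneg p x _
  · exact le_add_of_nonneg_left (by positivity)

lemma norm_hMap (hp : 0 < p.toReal) (hs : 0 ≤ s) (hx : Summable fun k => ‖x k‖ ^ p.toReal)
    (n : ℕ) : ‖hMap p s x n‖ = (lpTail p x n ^ s - lpTail p x (n + 1) ^ s) ^ (1 / p.toReal) := by
  rw [hMap_eq, norm_mul, Complex.norm_real,
    Real.norm_of_nonneg (Real.rpow_nonneg (sub_nonneg.2 (lpTail_succ_rpow_le hs hx n)) _)]
  by_cases h : x n = 0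
  · rw [lpTail_eq_add_lpTail_succ hx n, h, norm_zero, Real.zero_rpow hp.ne', zero_add, sub_self,
      Real.zero_rpow (by positivity), mul_zero]
  · rw [norm_div, Complex.norm_real, norm_norm, div_self (norm_ne_zero_iff.2 h), one_mul]

lemma hasSum_norm_hMap_rpow (hp : 0 < p.toReal) (hs : 0 < s)
    (hx : Summable fun k => ‖x k‖ ^ p.toReal) :
    HasSum (fun n => ‖hMap p s x n‖ ^ p.toReal) (lpTail p x 0 ^ s) := by
  have hdiff (n : ℕ) : ‖hMap p s x n‖ ^ p.toReal = lpTail p x n ^ s - lpTail p x (n + 1) ^ s := by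
    rw [norm_hMap hp hs.le hx, ← Real.rpow_mul (sub_nonneg.2 (lpTail_succ_rpow_le hs.le hx n)),
      one_div_mul_cancel hp.ne', Real.rpow_one]
  rw [hasSum_iff_tendsto_nat_of_nonneg (fun _ => by positivity)]
  simp_rw [hdiff, Finset.sum_range_sub']
  simpa [Real.zero_rpow hs.ne'] using
    tendsto_const_nhds.sub ((tendsto_lpTail_atTop p x).rpow_const (.inr hs.le))

end lpTail

section lpSpace

variable {p : ℝ≥0∞} {s : ℝ}

lemma norm_eq_rpow_of_apply_eq_hMap (hp : 0 < p.toReal) (hs : 0 < s)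
    {x y : lp (fun _ : ℕ => ℂ) p} (hy : ∀ n, y n = hMap p s x n) : ‖y‖ = ‖x‖ ^ s := by
  have hx := lp.hasSum_norm hp x
  have h : ‖y‖ ^ p.toReal = (‖x‖ ^ s) ^ p.toReal := by
    rw [← Real.rpow_mul (lp.norm_nonneg' x), mul_comm, Real.rpow_mul (lp.norm_nonneg' x),
      ← hx.tsum_eq, ← lpTail_zero]
    exact (lp.hasSum_norm hp y).unique
      (by simpa only [hy] using hasSum_norm_hMap_rpow hp hs hx.summable)
  exact (Real.rpow_left_inj (lp.norm_nonneg' y) (Real.rpow_nonneg (lp.norm_nonneg' x) s)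
    hp.ne').1 h

variable [Fact (1 ≤ p)]

lemma continuous_lpTail (hp : p ≠ ∞) (n : ℕ) :
    Continuous fun x : lp (fun _ : ℕ => ℂ) p => lpTail p x n := by
  have hq : 0 < p.toReal := one_pos.trans_le (ENNReal.one_le_toReal Fact.out hp)
  have h : (fun x : lp (fun _ : ℕ => ℂ) p => lpTail p x n) =
      fun x => ‖x‖ ^ p.toReal - ∑ k ∈ Finset.range n, ‖x k‖ ^ p.toReal :=
    funext fun x => by
      rw [lpTail_eq_tsum_sub_sum (lp.hasSum_norm hq x).summable, lp.norm_rpow_eq_tsum hq]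
  rw [h]
  exact (continuous_norm.rpow_const fun _ => .inr hq.le).sub <| continuous_finsetSum _ fun k _ =>
    (lp.lipschitzWith_one_eval p k).continuous.norm.rpow_const fun _ => .inr hq.le

lemma continuous_hMap_apply (hp : p ≠ ∞) (hs : 0 ≤ s) (n : ℕ) :
    Continuous fun x : lp (fun _ : ℕ => ℂ) p => hMap p s x n := by
  have hq : 0 < p.toReal := one_pos.trans_le (ENNReal.one_le_toReal Fact.out hp)
  have hρ : Continuous fun x : lp (fun _ : ℕ => ℂ) p =>
      (lpTail p x n ^ s - lpTail p x (n + 1) ^ s) ^ (1 / p.toReal) :=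
    (((continuous_lpTail hp n).rpow_const fun _ => .inr hs).sub
      ((continuous_lpTail hp (n + 1)).rpow_const fun _ => .inr hs)).rpow_const
      fun _ => .inr (by positivity)
  have hnorm (x : lp (fun _ : ℕ => ℂ) p) := norm_hMap hq hs (lp.hasSum_norm hq x).summable n
  have hcoord : Continuous fun x : lp (fun _ : ℕ => ℂ) p => x n :=
    (lp.lipschitzWith_one_eval p n).continuous
  refine continuous_iff_continuousAt.2 fun x => ?_
  by_cases h : x n = 0
  · have h0 : hMap p s x n = 0 := by simp [hMap, h]
    rw [ContinuousAt, h0, tendsto_zero_iff_norm_tendsto_zero]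
    simp_rw [hnorm]
    simpa only [ContinuousAt, ← hnorm x, h0, norm_zero] using hρ.continuousAt (x := x)
  · simp only [ContinuousAt, hMap_eq]
    have hsign : ContinuousAt (fun y : lp (fun _ : ℕ => ℂ) p => y n / (‖y n‖ : ℂ)) x :=
      hcoord.continuousAt.div (Complex.continuous_ofReal.comp hcoord.norm).continuousAt
        (by simpa using h)
    exact hsign.mul (Complex.continuous_ofReal.comp hρ).continuousAt

end lpSpace

/-- `h_p^(s) : ℓ^p → ℓ^p` is continuous. -/
theorem hMap_continuous (p : ℝ≥0∞) [Fact (1 ≤ p)] (hp : p ≠ ∞) (s : ℝ) (hs : 0 < s)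
    (H : lp (fun _ : ℕ => ℂ) p → lp (fun _ : ℕ => ℂ) p)
    (hH : ∀ (x : lp (fun _ : ℕ => ℂ) p) (n : ℕ), (H x : ℕ → ℂ) n = hMap p s x n) :
    Continuous H := by
  have hq : 0 < p.toReal := one_pos.trans_le (ENNReal.one_le_toReal Fact.out hp)
  refine lp.continuous_of_continuous_apply_of_continuous_norm hp
    (fun n => by simpa only [hH] using continuous_hMap_apply hp hs.le n) ?_
  simpa only [norm_eq_rpow_of_apply_eq_hMap hq hs (hH _)] using
    continuous_norm.rpow_const fun _ => .inr hs.le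
end

section
/- For 1 ≤ p < ∞ and nonzero complex numbers λ, ω, the operators λB_p and ωB_p on ℓ^p are topologically conjugate if and only if χ(|λ|) = χ(|ω|), where χ(t) = 1 if t > 1, 0 if t = 1, −1 if t < 1. -/
open scoped ENNReal

/-- The sign-type function `χ` from the paper. -/
noncomputable def chi (t : ℝ) : ℝ :=
  if t > 1 then 1 else if t = 1 then 0 else -1

/-!
The forward direction rests on two conjugacy invariants. For `‖λ‖ > 1` the shift `λB` has the
nonzero fixed point `(λ⁻ⁿ)ₙ`, while for `‖λ‖ ≤ 1` its only fixed point is `0`; so a conjugacy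
between two shifts with `‖λ‖, ‖ω‖ ≤ 1` fixes `0`. And `0` attracts a neighbourhood of itself
uniformly exactly when `‖λ‖ < 1`: for `‖λ‖ ≥ 1` the iterate `(λB)ᴺ` does not shrink `c • e_N`.

Conversely, if `χ(‖λ‖) = χ(‖ω‖)` then `‖ω‖ = ‖λ‖ ^ α` for some `α > 0`. Rescaling every
coordinate so that each tail sum `∑_{k ≥ n} ‖x_k‖ ^ p` is raised to the power `α` is a
homeomorphism of `ℓ^p` conjugating `λB` to `μB` with `‖μ‖ = ‖λ‖ ^ α = ‖ω‖`, and multiplying the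
`n`-th coordinate by `(μ / ω) ^ n` conjugates `μB` to `ωB`.
-/

open Filter Topology Function

lemma chi_eq_chi_iff {s t : ℝ} : chi s = chi t ↔ (1 < s ↔ 1 < t) ∧ (s < 1 ↔ t < 1) := by
  unfold chi
  split_ifs <;> norm_num <;> grind

lemma exists_pos_rpow_eq {s t : ℝ} (hs : 0 < s) (ht : 0 < t) (h₁ : 1 < s ↔ 1 < t)
    (h₂ : s < 1 ↔ t < 1) : ∃ α : ℝ, 0 < α ∧ s ^ α = t := by
  rcases lt_trichotomy s 1 with hs₁ | rfl | hs₁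
  · refine ⟨Real.log t / Real.log s,
      div_pos_of_neg_of_neg (Real.log_neg ht (h₂.1 hs₁)) (Real.log_neg hs hs₁), ?_⟩
    rw [Real.rpow_def_of_pos hs, mul_div_cancel₀ _ (Real.log_neg hs hs₁).ne, Real.exp_log ht]
  · refine ⟨1, one_pos, ?_⟩
    rw [Real.rpow_one]
    exact le_antisymm (not_lt.1 (mt h₂.2 (lt_irrefl 1))) (not_lt.1 (mt h₁.2 (lt_irrefl 1)))
  · refine ⟨Real.log t / Real.log s, div_pos (Real.log_pos (h₁.1 hs₁)) (Real.log_pos hs₁), ?_⟩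
    rw [Real.rpow_def_of_pos hs, mul_div_cancel₀ _ (Real.log_pos hs₁).ne', Real.exp_log ht]

/-- `f^[n] → a` uniformly on some neighbourhood `U` of `a`. -/
def IsUniformAttractor {X : Type*} [TopologicalSpace X] (f : X → X) (a : X) : Prop :=
  ∃ U ∈ 𝓝 a, Tendsto (fun q : ℕ × X => f^[q.1] q.2) (atTop ×ˢ 𝓟 U) (𝓝 a)

lemma IsUniformAttractor.of_semiconj {X Y : Type*} [TopologicalSpace X] [TopologicalSpace Y]
    {f : X → X} {g : Y → Y} {a : X} (h : X ≃ₜ Y) (hh : Semiconj h f g)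
    (hf : IsUniformAttractor f a) : IsUniformAttractor g (h a) := by
  obtain ⟨U, hU, hT⟩ := hf
  refine ⟨h.symm ⁻¹' U, h.symm.continuous.continuousAt.preimage_mem_nhds (by simpa using hU), ?_⟩
  have hg : (fun q : ℕ × Y => g^[q.1] q.2) =
      h ∘ (fun q : ℕ × X => f^[q.1] q.2) ∘ Prod.map id h.symm := by
    funext q
    simp [(hh.iterate_right q.1) (h.symm q.2)]
  rw [hg]
  exact (h.continuous.tendsto a).comp
    (hT.comp (tendsto_id.prodMap (tendsto_principal_principal.2 fun _ hy => hy)))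

lemma rpow_norm_sub_le {G : Type*} [SeminormedAddCommGroup G] (a b : G) {q : ℝ} (hq : 0 ≤ q) :
    ‖a - b‖ ^ q ≤ 2 ^ q * (‖a‖ ^ q + ‖b‖ ^ q) := by
  have hmax : ‖a - b‖ ≤ 2 * max ‖a‖ ‖b‖ := by
    linarith [norm_sub_le a b, le_max_left ‖a‖ ‖b‖, le_max_right ‖a‖ ‖b‖]
  calc ‖a - b‖ ^ q ≤ (2 * max ‖a‖ ‖b‖) ^ q := by gcongr
    _ = 2 ^ q * max ‖a‖ ‖b‖ ^ q := Real.mul_rpow zero_le_two (by positivity)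
    _ ≤ 2 ^ q * (‖a‖ ^ q + ‖b‖ ^ q) := by
      gcongr
      rcases max_cases ‖a‖ ‖b‖ with ⟨h, -⟩ | ⟨h, -⟩ <;> rw [h] <;>
        linarith [Real.rpow_nonneg (norm_nonneg a) q, Real.rpow_nonneg (norm_nonneg b) q]

lemma hasSum_sub_succ_of_antitone {f : ℕ → ℝ} (hf : Antitone f) (hlim : Tendsto f atTop (𝓝 0)) :
    HasSum (fun n => f n - f (n + 1)) (f 0) := by
  rw [hasSum_iff_tendsto_nat_of_nonneg fun n => sub_nonneg.2 (hf n.le_succ)]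
  simp only [Finset.sum_range_sub']
  simpa using (tendsto_const_nhds (x := f 0)).sub hlim

namespace WeightedShift

variable {p : ℝ≥0∞}

local notation "ℓᵖ" => lp (fun _ : ℕ => ℂ) p

lemma summable_norm_rpow [Fact (1 ≤ p)] (hp : p ≠ ∞) (x : ℓᵖ) :
    Summable fun n => ‖x n‖ ^ p.toReal :=
  (lp.memℓp x).summable ((ENNReal.toReal_pos_iff_ne_top p).2 hp)

noncomputable def tailSum (x : ℓᵖ) (N : ℕ) : ℝ :=
  ∑' k, ‖x (k + N)‖ ^ p.toReal

lemma tailSum_nonneg (x : ℓᵖ) (N : ℕ) : 0 ≤ tailSum x N :=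
  tsum_nonneg fun _ => by positivity

lemma tendsto_tailSum (x : ℓᵖ) : Tendsto (tailSum x) atTop (𝓝 0) :=
  tendsto_sum_nat_add fun k => ‖x k‖ ^ p.toReal

/-- The factor is chosen so that `x' = powerMapSeq α x` has `‖x'ₙ‖ ^ p = Sₙ ^ α - Sₙ₊₁ ^ α` for
`Sₙ = tailSum x n`, hence the tail sums of `x'` are the `Sₙ ^ α`. If `x n = 0` then `Sₙ = Sₙ₊₁`,
so the junk value of the division does no harm. -/
noncomputable def powerMapSeq (α : ℝ) (x : ℓᵖ) (n : ℕ) : ℂ :=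
  x n * (((tailSum x n ^ α - tailSum x (n + 1) ^ α) / ‖x n‖ ^ p.toReal) ^ p.toReal⁻¹ : ℝ)

lemma powerMapSeq_of_eq_zero {α : ℝ} {x : ℓᵖ} {n : ℕ} (hxn : x n = 0) : powerMapSeq α x n = 0 := by
  simp [powerMapSeq, hxn]

variable [Fact (1 ≤ p)]

lemma sum_range_add_tailSum (hp : p ≠ ∞) (x : ℓᵖ) (N : ℕ) :
    ∑ n ∈ Finset.range N, ‖x n‖ ^ p.toReal + tailSum x N = ‖x‖ ^ p.toReal := by
  rw [lp.norm_rpow_eq_tsum ((ENNReal.toReal_pos_iff_ne_top p).2 hp)]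
  exact (summable_norm_rpow hp x).sum_add_tsum_nat_add N

lemma tailSum_le (hp : p ≠ ∞) (x : ℓᵖ) (N : ℕ) : tailSum x N ≤ ‖x‖ ^ p.toReal := by
  rw [← sum_range_add_tailSum hp x N]
  exact le_add_of_nonneg_left (Finset.sum_nonneg fun _ _ => by positivity)

lemma tailSum_eq_add_tailSum_succ (hp : p ≠ ∞) (x : ℓᵖ) (N : ℕ) :
    tailSum x N = ‖x N‖ ^ p.toReal + tailSum x (N + 1) := by
  have h₁ := sum_range_add_tailSum hp x N
  have h₂ := sum_range_add_tailSum hp x (N + 1)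
  rw [Finset.sum_range_succ] at h₂
  linarith

lemma tailSum_succ_le (hp : p ≠ ∞) (x : ℓᵖ) (N : ℕ) : tailSum x (N + 1) ≤ tailSum x N := by
  rw [tailSum_eq_add_tailSum_succ hp x N]
  exact le_add_of_nonneg_left (by positivity)

lemma continuous_tailSum (hp : p ≠ ∞) (N : ℕ) : Continuous fun x : ℓᵖ => tailSum x N := by
  have hp₀ := ((ENNReal.toReal_pos_iff_ne_top p).2 hp).le
  have h : (fun x : ℓᵖ => tailSum x N) =
      fun x => ‖x‖ ^ p.toReal - ∑ n ∈ Finset.range N, ‖x n‖ ^ p.toReal := by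
    funext x
    rw [← sum_range_add_tailSum hp x N, add_sub_cancel_left]
  rw [h]
  exact (continuous_norm.rpow_const fun _ => Or.inr hp₀).sub <| continuous_finsetSum _ fun n _ =>
    (lp.lipschitzWith_one_eval p n).continuous.norm.rpow_const fun _ => Or.inr hp₀

lemma tailSum_sub_le (hp : p ≠ ∞) (x y : ℓᵖ) (N : ℕ) :
    tailSum (x - y) N ≤ 2 ^ p.toReal * (tailSum x N + tailSum y N) := by
  have hs : ∀ z : ℓᵖ, Summable fun k => ‖z (k + N)‖ ^ p.toReal :=
    fun z => (summable_nat_add_iff N).2 (summable_norm_rpow hp z)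
  rw [tailSum, tailSum, tailSum, ← (hs x).tsum_add (hs y), ← tsum_mul_left]
  refine ((hs (x - y)).tsum_le_tsum (fun k => ?_) (((hs x).add (hs y)).mul_left _))
  exact rpow_norm_sub_le _ _ ((ENNReal.toReal_pos_iff_ne_top p).2 hp).le

lemma continuousAt_of_coord_of_tailSum (hp : p ≠ ∞) {X : Type*} [TopologicalSpace X] {F : X → ℓᵖ}
    {x : X} (hcoord : ∀ n, ContinuousAt (fun y => F y n) x)
    (htail : ∀ ε > 0, ∃ N, ∀ᶠ y in 𝓝 x, tailSum (F y) N < ε) : ContinuousAt F x := by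
  have hp₀ := (ENNReal.toReal_pos_iff_ne_top p).2 hp
  suffices Tendsto (fun y => ‖F y - F x‖ ^ p.toReal) (𝓝 x) (𝓝 0) by
    rw [ContinuousAt, tendsto_iff_norm_sub_tendsto_zero]
    simpa [Real.rpow_rpow_inv (norm_nonneg _) hp₀.ne', Real.zero_rpow (inv_ne_zero hp₀.ne')]
      using this.rpow_const (p := p.toReal⁻¹) (Or.inr (by positivity))
  refine tendsto_order.2 ⟨fun a ha => Eventually.of_forall fun y => ha.trans_le (by positivity),
    fun ε hε => ?_⟩
  set η := ε / 2 ^ p.toReal / 4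
  obtain ⟨N, hN⟩ := htail η (by positivity)
  have hhead : Tendsto (fun y => ∑ n ∈ Finset.range N, ‖(F y - F x) n‖ ^ p.toReal) (𝓝 x) (𝓝 0) := by
    have := tendsto_finsetSum (Finset.range N) fun n _ =>
      (((hcoord n).sub (continuousAt_const (y := F x n))).norm.rpow_const (p := p.toReal)
        (Or.inr hp₀.le))
    simpa [Real.zero_rpow hp₀.ne'] using this
  filter_upwards [hhead.eventually_lt_const (half_pos hε), hN] with y hy₁ hy₂
  have htail_le := tailSum_sub_le hp (F y) (F x) N
  have hx := hN.self_of_nhds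
  have : 2 ^ p.toReal * (tailSum (F y) N + tailSum (F x) N) < ε / 2 := by
    calc 2 ^ p.toReal * (tailSum (F y) N + tailSum (F x) N) < 2 ^ p.toReal * (2 * η) := by
          gcongr; linarith
      _ = ε / 2 := by simp only [η]; field_simp; ring
  rw [← sum_range_add_tailSum hp _ N]
  linarith


noncomputable def shift (hp : p ≠ ∞) (l : ℂ) (x : ℓᵖ) : ℓᵖ :=
  ⟨fun n => l * x (n + 1),
    (memℓp_gen ((summable_nat_add_iff 1).2 (summable_norm_rpow hp x))).const_mul l⟩

@[simp]
lemma shift_apply (hp : p ≠ ∞) (l : ℂ) (x : ℓᵖ) (n : ℕ) : shift hp l x n = l * x (n + 1) := rfl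

lemma eq_shift {hp : p ≠ ∞} {l : ℂ} {B : ℓᵖ → ℓᵖ} (hB : ∀ x n, (B x : ℕ → ℂ) n = l * x (n + 1)) :
    B = shift hp l :=
  funext fun x => lp.ext (funext (hB x))

lemma shift_iterate_apply (hp : p ≠ ∞) (l : ℂ) (k : ℕ) (x : ℓᵖ) (n : ℕ) :
    (shift hp l)^[k] x n = l ^ k * x (n + k) := by
  induction k generalizing n with
  | zero => simp
  | succ k ih =>
    rw [iterate_succ_apply', shift_apply, ih, ← mul_assoc, ← pow_succ', add_right_comm, add_assoc]

lemma tailSum_shift (hp : p ≠ ∞) (l : ℂ) (x : ℓᵖ) (N : ℕ) :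
    tailSum (shift hp l x) N = ‖l‖ ^ p.toReal * tailSum x (N + 1) := by
  rw [tailSum, tailSum, ← tsum_mul_left]
  refine tsum_congr fun k => ?_
  rw [shift_apply, norm_mul, Real.mul_rpow (norm_nonneg _) (norm_nonneg _), add_assoc]

lemma norm_shift_iterate_le (hp : p ≠ ∞) (l : ℂ) (k : ℕ) (x : ℓᵖ) :
    ‖(shift hp l)^[k] x‖ ≤ ‖l‖ ^ k * ‖x‖ := by
  have hp₀ := (ENNReal.toReal_pos_iff_ne_top p).2 hp
  refine lp.norm_le_of_tsum_le hp₀ (by positivity) ?_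
  calc ∑' n, ‖(shift hp l)^[k] x n‖ ^ p.toReal = (‖l‖ ^ k) ^ p.toReal * tailSum x k := by
        rw [tailSum, ← tsum_mul_left]
        refine tsum_congr fun n => ?_
        rw [shift_iterate_apply, norm_mul, norm_pow, Real.mul_rpow (by positivity) (norm_nonneg _),
          add_comm]
    _ ≤ (‖l‖ ^ k) ^ p.toReal * ‖x‖ ^ p.toReal := by gcongr; exact tailSum_le hp x k
    _ = (‖l‖ ^ k * ‖x‖) ^ p.toReal := (Real.mul_rpow (by positivity) (norm_nonneg _)).symm

lemma isFixedPt_shift_zero (hp : p ≠ ∞) (l : ℂ) : IsFixedPt (shift hp l) 0 :=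
  lp.ext (funext fun n => by simp)

lemma eq_zero_of_isFixedPt_shift (hp : p ≠ ∞) {l : ℂ} (hl : ‖l‖ ≤ 1) {x : ℓᵖ}
    (hx : IsFixedPt (shift hp l) x) : x = 0 := by
  have hp₀ := (ENNReal.toReal_pos_iff_ne_top p).2 hp
  refine lp.ext (funext fun n => ?_)
  have hle : ∀ k, ‖x n‖ ^ p.toReal ≤ ‖x (k + n)‖ ^ p.toReal := fun k => by
    have hk : l ^ k * x (n + k) = x n := by
      rw [← shift_iterate_apply hp l k x n, (hx.iterate k).eq]
    rw [add_comm k n, ← hk, norm_mul, norm_pow]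
    gcongr
    exact mul_le_of_le_one_left (norm_nonneg _) (pow_le_one₀ (norm_nonneg _) hl)
  have hlim : Tendsto (fun k => ‖x (k + n)‖ ^ p.toReal) atTop (𝓝 0) :=
    (summable_norm_rpow hp x).tendsto_atTop_zero.comp (tendsto_add_atTop_nat n)
  have h0 : ‖x n‖ ^ p.toReal = 0 :=
    le_antisymm (ge_of_tendsto' hlim hle) (by positivity)
  simpa [Real.rpow_eq_zero_iff_of_nonneg (norm_nonneg _), hp₀.ne'] using h0

lemma exists_isFixedPt_shift_ne_zero (hp : p ≠ ∞) {l : ℂ} (hl : 1 < ‖l‖) :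
    ∃ x : ℓᵖ, IsFixedPt (shift hp l) x ∧ x ≠ 0 := by
  have hp₀ := (ENNReal.toReal_pos_iff_ne_top p).2 hp
  have hl₀ : l ≠ 0 := norm_pos_iff.1 (one_pos.trans hl)
  have hsum : Summable fun n : ℕ => ‖l⁻¹ ^ n‖ ^ p.toReal := by
    have hr : ‖l⁻¹‖ ^ p.toReal < 1 :=
      Real.rpow_lt_one (norm_nonneg _) (by rw [norm_inv]; exact inv_lt_one_of_one_lt₀ hl) hp₀
    refine (summable_geometric_of_lt_one (by positivity) hr).congr fun n => ?_
    rw [norm_pow, ← Real.rpow_natCast, ← Real.rpow_natCast, ← Real.rpow_mul (norm_nonneg _),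
      ← Real.rpow_mul (norm_nonneg _), mul_comm]
  refine ⟨⟨fun n => l⁻¹ ^ n, memℓp_gen hsum⟩, lp.ext (funext fun n => ?_), fun h => ?_⟩
  · change l * l⁻¹ ^ (n + 1) = l⁻¹ ^ n
    rw [pow_succ, mul_left_comm, mul_inv_cancel₀ hl₀, mul_one]
  · simpa using congrArg (fun x : ℓᵖ => x 0) h

lemma fixedPoints_shift_nontrivial_iff (hp : p ≠ ∞) {l : ℂ} :
    (fixedPoints (shift hp l)).Nontrivial ↔ 1 < ‖l‖ := by
  refine ⟨fun ⟨x, hx, y, hy, hxy⟩ => ?_, fun hl => ?_⟩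
  · by_contra hl
    exact hxy ((eq_zero_of_isFixedPt_shift hp (not_lt.1 hl) hx).trans
      (eq_zero_of_isFixedPt_shift hp (not_lt.1 hl) hy).symm)
  · obtain ⟨x, hx, hx₀⟩ := exists_isFixedPt_shift_ne_zero hp hl
    exact ⟨x, hx, 0, isFixedPt_shift_zero hp l, hx₀⟩

lemma isUniformAttractor_shift_iff (hp : p ≠ ∞) {l : ℂ} :
    IsUniformAttractor (shift hp l) 0 ↔ ‖l‖ < 1 := by
  refine ⟨fun ⟨U, hU, hT⟩ => ?_, fun hl => ⟨Metric.ball 0 1, Metric.ball_mem_nhds 0 one_pos, ?_⟩⟩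
  · by_contra hl
    obtain ⟨δ, hδ, hδU⟩ := Metric.mem_nhds_iff.1 hU
    obtain ⟨N, hN⟩ := (eventually_prod_principal_iff.1
      (hT.eventually (Metric.ball_mem_nhds 0 (half_pos hδ)))).exists
    set c : ℂ := ((δ / 2 : ℝ) : ℂ)
    have hc : ‖c‖ = δ / 2 := by simp [c, abs_of_pos hδ]
    have hy : lp.single p N c ∈ U := hδU <| by
      rw [mem_ball_zero_iff, lp.norm_single (zero_lt_one.trans_le Fact.out), hc]
      exact half_lt_self hδ
    have hlt : ‖(shift hp l)^[N] (lp.single p N c)‖ < δ / 2 := mem_ball_zero_iff.1 (hN _ hy)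
    have hge := lp.norm_apply_le_norm (zero_lt_one.trans_le Fact.out).ne'
      ((shift hp l)^[N] (lp.single p N c)) 0
    rw [shift_iterate_apply, zero_add, lp.single_apply_self, norm_mul, norm_pow, hc] at hge
    have : δ / 2 ≤ ‖l‖ ^ N * (δ / 2) :=
      le_mul_of_one_le_left (by positivity) (one_le_pow₀ (not_lt.1 hl))
    linarith
  · rw [tendsto_zero_iff_norm_tendsto_zero]
    refine squeeze_zero' (Eventually.of_forall fun _ => norm_nonneg _)
      (eventually_prod_principal_iff.2 (Eventually.of_forall fun k y hy => ?_))
      ((tendsto_pow_atTop_nhds_zero_of_lt_one (norm_nonneg l) hl).comp tendsto_fst)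
    calc ‖(shift hp l)^[k] y‖ ≤ ‖l‖ ^ k * ‖y‖ := norm_shift_iterate_le hp l k y
      _ ≤ ‖l‖ ^ k := mul_le_of_le_one_right (by positivity) (mem_ball_zero_iff.1 hy).le

lemma rpow_tailSum_sub_nonneg (hp : p ≠ ∞) {α : ℝ} (hα : 0 ≤ α) (x : ℓᵖ) (n : ℕ) :
    0 ≤ tailSum x n ^ α - tailSum x (n + 1) ^ α :=
  sub_nonneg.2 (Real.rpow_le_rpow (tailSum_nonneg x _) (tailSum_succ_le hp x n) hα)

lemma tailSum_succ_of_eq_zero (hp : p ≠ ∞) {x : ℓᵖ} {n : ℕ} (hxn : x n = 0) :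
    tailSum x (n + 1) = tailSum x n := by
  have hp₀ := (ENNReal.toReal_pos_iff_ne_top p).2 hp
  simp [tailSum_eq_add_tailSum_succ hp x n, hxn, Real.zero_rpow hp₀.ne']

lemma norm_powerMapSeq_rpow (hp : p ≠ ∞) {α : ℝ} (hα : 0 ≤ α) (x : ℓᵖ) (n : ℕ) :
    ‖powerMapSeq α x n‖ ^ p.toReal = tailSum x n ^ α - tailSum x (n + 1) ^ α := by
  have hp₀ := (ENNReal.toReal_pos_iff_ne_top p).2 hp
  by_cases hxn : x n = 0
  · simp [powerMapSeq_of_eq_zero hxn, tailSum_succ_of_eq_zero hp hxn, Real.zero_rpow hp₀.ne']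
  have hB : 0 < ‖x n‖ ^ p.toReal := by positivity
  have hD := div_nonneg (rpow_tailSum_sub_nonneg hp hα x n) hB.le
  rw [powerMapSeq, norm_mul, Complex.norm_real, Real.norm_of_nonneg (by positivity),
    Real.mul_rpow (norm_nonneg _) (by positivity), Real.rpow_inv_rpow hD hp₀.ne',
    mul_div_cancel₀ _ hB.ne']

lemma norm_powerMapSeq (hp : p ≠ ∞) {α : ℝ} (hα : 0 ≤ α) (x : ℓᵖ) (n : ℕ) :
    ‖powerMapSeq α x n‖ = (tailSum x n ^ α - tailSum x (n + 1) ^ α) ^ p.toReal⁻¹ := by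
  have hp₀ := (ENNReal.toReal_pos_iff_ne_top p).2 hp
  rw [← norm_powerMapSeq_rpow hp hα, Real.rpow_rpow_inv (norm_nonneg _) hp₀.ne']

lemma hasSum_norm_powerMapSeq_rpow (hp : p ≠ ∞) {α : ℝ} (hα : 0 < α) (x : ℓᵖ) (N : ℕ) :
    HasSum (fun k => ‖powerMapSeq α x (k + N)‖ ^ p.toReal) (tailSum x N ^ α) := by
  have hlim : Tendsto (fun k => tailSum x (k + N) ^ α) atTop (𝓝 0) := by
    simpa [Real.zero_rpow hα.ne'] using
      ((tendsto_tailSum x).comp (tendsto_add_atTop_nat N)).rpow_const (p := α) (Or.inr hα.le)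
  have hanti : Antitone fun k => tailSum x (k + N) ^ α := antitone_nat_of_succ_le fun k => by
    rw [add_right_comm]
    exact Real.rpow_le_rpow (tailSum_nonneg x _) (tailSum_succ_le hp x _) hα.le
  simpa [norm_powerMapSeq_rpow hp hα.le, add_right_comm] using
    hasSum_sub_succ_of_antitone hanti hlim

noncomputable def powerMap (hp : p ≠ ∞) {α : ℝ} (hα : 0 < α) (x : ℓᵖ) : ℓᵖ :=
  ⟨powerMapSeq α x, memℓp_gen (by simpa using (hasSum_norm_powerMapSeq_rpow hp hα x 0).summable)⟩

@[simp]
lemma powerMap_apply (hp : p ≠ ∞) {α : ℝ} (hα : 0 < α) (x : ℓᵖ) (n : ℕ) :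
    powerMap hp hα x n = powerMapSeq α x n := rfl

lemma tailSum_powerMap (hp : p ≠ ∞) {α : ℝ} (hα : 0 < α) (x : ℓᵖ) (N : ℕ) :
    tailSum (powerMap hp hα x) N = tailSum x N ^ α :=
  (hasSum_norm_powerMapSeq_rpow hp hα x N).tsum_eq

lemma powerMap_inv_powerMap (hp : p ≠ ∞) {α : ℝ} (hα : 0 < α) (x : ℓᵖ) :
    powerMap hp (inv_pos.2 hα) (powerMap hp hα x) = x := by
  refine lp.ext (funext fun n => ?_)
  by_cases hxn : x n = 0
  · simp [powerMapSeq, hxn]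
  have hB : tailSum x n - tailSum x (n + 1) = ‖x n‖ ^ p.toReal := by
    rw [tailSum_eq_add_tailSum_succ hp x n]; ring
  set S₀ := tailSum x n
  set S₁ := tailSum x (n + 1)
  have hB₀ : 0 < S₀ - S₁ := hB ▸ by positivity
  have hD₀ : 0 < S₀ ^ α - S₁ ^ α :=
    sub_pos.2 (Real.rpow_lt_rpow (tailSum_nonneg x _) (by linarith) hα)
  have hinv : ((S₀ ^ α - S₁ ^ α) / (S₀ - S₁)) ^ p.toReal⁻¹ *
      ((S₀ - S₁) / (S₀ ^ α - S₁ ^ α)) ^ p.toReal⁻¹ = 1 := by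
    rw [← Real.mul_rpow (by positivity) (by positivity),
      div_mul_div_cancel₀ hB₀.ne', div_self hD₀.ne', Real.one_rpow]
  rw [powerMap_apply, powerMapSeq, tailSum_powerMap, tailSum_powerMap, powerMap_apply,
    norm_powerMapSeq_rpow hp hα.le, Real.rpow_rpow_inv (tailSum_nonneg x _) hα.ne',
    Real.rpow_rpow_inv (tailSum_nonneg x _) hα.ne', powerMapSeq, ← hB, mul_assoc,
    ← Complex.ofReal_mul, hinv, Complex.ofReal_one, mul_one]

lemma powerMapSeq_shift (hp : p ≠ ∞) {α : ℝ} (hα : 0 ≤ α) {l : ℂ} (hl : l ≠ 0) (x : ℓᵖ) (n : ℕ) :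
    powerMapSeq α (shift hp l x) n = l * (‖l‖ ^ (α - 1) : ℝ) * powerMapSeq α x (n + 1) := by
  have hp₀ := (ENNReal.toReal_pos_iff_ne_top p).2 hp
  have hc : 0 < ‖l‖ ^ p.toReal := Real.rpow_pos_of_pos (norm_pos_iff.2 hl) _
  have hD := rpow_tailSum_sub_nonneg hp hα x (n + 1)
  have hratio : ((‖l‖ ^ p.toReal * tailSum x (n + 1)) ^ α -
        (‖l‖ ^ p.toReal * tailSum x (n + 1 + 1)) ^ α) / (‖l‖ ^ p.toReal * ‖x (n + 1)‖ ^ p.toReal) =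
      (‖l‖ ^ p.toReal) ^ (α - 1) *
        ((tailSum x (n + 1) ^ α - tailSum x (n + 1 + 1) ^ α) / ‖x (n + 1)‖ ^ p.toReal) := by
    rw [Real.mul_rpow hc.le (tailSum_nonneg x _), Real.mul_rpow hc.le (tailSum_nonneg x _),
      ← mul_sub, mul_div_mul_comm, Real.rpow_sub_one hc.ne']
  have hpow : ((‖l‖ ^ p.toReal) ^ (α - 1)) ^ p.toReal⁻¹ = ‖l‖ ^ (α - 1) := by
    rw [← Real.rpow_mul (norm_nonneg _), ← Real.rpow_mul (norm_nonneg _)]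
    congr 1
    field_simp
  rw [powerMapSeq, powerMapSeq, tailSum_shift, tailSum_shift, shift_apply, norm_mul,
    Real.mul_rpow (norm_nonneg _) (norm_nonneg _), hratio,
    Real.mul_rpow (by positivity) (div_nonneg hD (by positivity)), hpow]
  push_cast
  ring

lemma semiconj_powerMap_shift (hp : p ≠ ∞) {α : ℝ} (hα : 0 < α) {l : ℂ} (hl : l ≠ 0) :
    Semiconj (powerMap hp hα) (shift hp l) (shift hp (l * (‖l‖ ^ (α - 1) : ℝ))) :=
  fun x => lp.ext (funext fun n => powerMapSeq_shift hp hα.le hl x n)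

lemma continuousAt_powerMapSeq (hp : p ≠ ∞) {α : ℝ} (hα : 0 < α) (x : ℓᵖ) (n : ℕ) :
    ContinuousAt (fun y : ℓᵖ => powerMapSeq α y n) x := by
  have hp₀ := (ENNReal.toReal_pos_iff_ne_top p).2 hp
  have hD : Continuous fun y : ℓᵖ => tailSum y n ^ α - tailSum y (n + 1) ^ α :=
    ((continuous_tailSum hp n).rpow_const fun _ => Or.inr hα.le).sub
      ((continuous_tailSum hp _).rpow_const fun _ => Or.inr hα.le)
  have hcoord : Continuous fun y : ℓᵖ => y n := (lp.lipschitzWith_one_eval p n).continuous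
  by_cases hxn : x n = 0
  · rw [ContinuousAt, powerMapSeq_of_eq_zero hxn, tendsto_zero_iff_norm_tendsto_zero]
    simp_rw [norm_powerMapSeq hp hα.le]
    have := (hD.rpow_const fun _ => Or.inr (inv_nonneg.2 hp₀.le)).tendsto x
    rwa [tailSum_succ_of_eq_zero hp hxn, sub_self, Real.zero_rpow (inv_ne_zero hp₀.ne')] at this
  · have hB : ContinuousAt (fun y : ℓᵖ => ‖y n‖ ^ p.toReal) x :=
      (hcoord.norm.rpow_const fun _ => Or.inr hp₀.le).continuousAt
    exact hcoord.continuousAt.mul <| Complex.continuous_ofReal.continuousAt.comp <|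
      (hD.continuousAt.div hB (by positivity)).rpow_const (Or.inr (by positivity))

lemma continuous_powerMap (hp : p ≠ ∞) {α : ℝ} (hα : 0 < α) : Continuous (powerMap hp hα) := by
  refine continuous_iff_continuousAt.2 fun x =>
    continuousAt_of_coord_of_tailSum hp (continuousAt_powerMapSeq hp hα x) fun ε hε => ?_
  have hlim : Tendsto (fun N => tailSum x N ^ α) atTop (𝓝 0) := by
    simpa [Real.zero_rpow hα.ne'] using (tendsto_tailSum x).rpow_const (p := α) (Or.inr hα.le)
  obtain ⟨N, hN⟩ := (hlim.eventually_lt_const hε).exists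
  refine ⟨N, ?_⟩
  simp only [tailSum_powerMap]
  exact (((continuous_tailSum hp N).rpow_const fun _ => Or.inr hα.le).tendsto x).eventually_lt_const
    hN

noncomputable def powerHomeomorph (hp : p ≠ ∞) {α : ℝ} (hα : 0 < α) : ℓᵖ ≃ₜ ℓᵖ where
  toFun := powerMap hp hα
  invFun := powerMap hp (inv_pos.2 hα)
  left_inv := powerMap_inv_powerMap hp hα
  right_inv x := by simpa using powerMap_inv_powerMap hp (inv_pos.2 hα) x
  continuous_toFun := continuous_powerMap hp hα
  continuous_invFun := continuous_powerMap hp (inv_pos.2 hα)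

noncomputable def unimodularMul (u : ℕ → ℂ) (hu : ∀ n, ‖u n‖ = 1) : ℓᵖ ≃ₗᵢ[ℂ] ℓᵖ where
  toFun x := ⟨fun n => u n * x n, (lp.memℓp x).mono' fun n => by simp [hu]⟩
  invFun x := ⟨fun n => (u n)⁻¹ * x n, (lp.memℓp x).mono' fun n => by simp [hu]⟩
  map_add' x y := lp.ext (funext fun n => mul_add (u n) (x n) (y n))
  map_smul' c x := lp.ext (funext fun n => mul_left_comm (u n) c (x n))
  left_inv x := lp.ext (funext fun n => inv_mul_cancel_left₀ (norm_ne_zero_iff.1 (by simp [hu])) _)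
  right_inv x := lp.ext (funext fun n => mul_inv_cancel_left₀ (norm_ne_zero_iff.1 (by simp [hu])) _)
  norm_map' x :=
    le_antisymm (lp.norm_mono (zero_lt_one.trans_le Fact.out).ne' fun n => by simp [hu])
      (lp.norm_mono (zero_lt_one.trans_le Fact.out).ne' fun n => by simp [hu])

lemma semiconj_unimodularMul_shift (hp : p ≠ ∞) {u : ℕ → ℂ} (hu : ∀ n, ‖u n‖ = 1) {μ w : ℂ}
    (huμw : ∀ n, u n * μ = w * u (n + 1)) :
    Semiconj (unimodularMul u hu) (shift hp μ) (shift hp w) :=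
  fun x => lp.ext (funext fun n => by
    change u n * (μ * x (n + 1)) = w * (u (n + 1) * x (n + 1))
    rw [← mul_assoc, huμw, mul_assoc])

lemma exists_homeomorph_semiconj_shift (hp : p ≠ ∞) {l w : ℂ} (hl : l ≠ 0) (hw : w ≠ 0) {α : ℝ}
    (hα : 0 < α) (hlw : ‖l‖ ^ α = ‖w‖) : ∃ h : ℓᵖ ≃ₜ ℓᵖ, Semiconj h (shift hp l) (shift hp w) := by
  set μ : ℂ := l * (‖l‖ ^ (α - 1) : ℝ)
  have hμ : ‖μ‖ = ‖w‖ := by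
    rw [norm_mul, Complex.norm_real, Real.norm_of_nonneg (by positivity), ← hlw, mul_comm,
      ← Real.rpow_add_one (norm_ne_zero_iff.2 hl), sub_add_cancel]
  have hc : ∀ n, ‖(μ / w) ^ n‖ = 1 := fun n => by
    rw [norm_pow, norm_div, hμ, div_self (norm_ne_zero_iff.2 hw), one_pow]
  have hstep : ∀ n, (μ / w) ^ n * μ = w * (μ / w) ^ (n + 1) := fun n => by
    rw [pow_succ, mul_left_comm w, mul_div_cancel₀ _ hw]
  refine ⟨(powerHomeomorph hp hα).trans (unimodularMul _ hc).toHomeomorph, ?_⟩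
  change Semiconj (unimodularMul _ hc ∘ powerMap hp hα) (shift hp l) (shift hp w)
  exact (semiconj_unimodularMul_shift hp hc hstep).comp_left (semiconj_powerMap_shift hp hα hl)

lemma one_lt_norm_of_semiconj (hp : p ≠ ∞) {l w : ℂ} {h : ℓᵖ → ℓᵖ} (hinj : Injective h)
    (hh : Semiconj h (shift hp l) (shift hp w)) (hl : 1 < ‖l‖) : 1 < ‖w‖ := by
  rw [← fixedPoints_shift_nontrivial_iff hp] at hl ⊢
  exact (hl.image hinj).mono hh.mapsTo_fixedPoints.image_subset

lemma norm_lt_one_of_semiconj (hp : p ≠ ∞) {l w : ℂ} (h : ℓᵖ ≃ₜ ℓᵖ)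
    (hh : Semiconj h (shift hp l) (shift hp w)) (hl : ‖l‖ < 1) : ‖w‖ < 1 := by
  have hh' : Semiconj h.symm (shift hp w) (shift hp l) := hh.inverse_left h.left_inv h.right_inv
  have hw : ‖w‖ ≤ 1 := not_lt.1 fun hw =>
    (one_lt_norm_of_semiconj hp h.symm.injective hh' hw).not_gt hl
  have h₀ : h 0 = 0 :=
    eq_zero_of_isFixedPt_shift hp hw (hh.mapsTo_fixedPoints (isFixedPt_shift_zero hp l))
  have := ((isUniformAttractor_shift_iff hp).2 hl).of_semiconj h hh
  rwa [h₀, isUniformAttractor_shift_iff hp] at this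

end WeightedShift

open WeightedShift

/-- `λB_p` and `ωB_p` are topologically conjugate iff `χ(|λ|) = χ(|ω|)`. -/
theorem shifts_conjugate_iff_chi_eq (p : ℝ≥0∞) [Fact (1 ≤ p)] (hp : p ≠ ∞)
    (l w : ℂ) (hl : l ≠ 0) (hw : w ≠ 0)
    (Bl Bw : lp (fun _ : ℕ => ℂ) p → lp (fun _ : ℕ => ℂ) p)
    (hBl : ∀ (x : lp (fun _ : ℕ => ℂ) p) (n : ℕ), (Bl x : ℕ → ℂ) n = l * x (n + 1))
    (hBw : ∀ (x : lp (fun _ : ℕ => ℂ) p) (n : ℕ), (Bw x : ℕ → ℂ) n = w * x (n + 1)) :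
    (∃ h : lp (fun _ : ℕ => ℂ) p ≃ₜ lp (fun _ : ℕ => ℂ) p,
        ∀ x, h (Bl x) = Bw (h x)) ↔ chi ‖l‖ = chi ‖w‖ := by
  obtain rfl : Bl = shift hp l := eq_shift hBl
  obtain rfl : Bw = shift hp w := eq_shift hBw
  rw [chi_eq_chi_iff]
  constructor
  · rintro ⟨h, hh⟩
    change Semiconj h (shift hp l) (shift hp w) at hh
    have hh' : Semiconj h.symm (shift hp w) (shift hp l) := hh.inverse_left h.left_inv h.right_inv
    exact ⟨⟨one_lt_norm_of_semiconj hp h.injective hh,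
        one_lt_norm_of_semiconj hp h.symm.injective hh'⟩,
      ⟨norm_lt_one_of_semiconj hp h hh, norm_lt_one_of_semiconj hp h.symm hh'⟩⟩
  · rintro ⟨h₁, h₂⟩
    obtain ⟨α, hα, hlw⟩ := exists_pos_rpow_eq (norm_pos_iff.2 hl) (norm_pos_iff.2 hw) h₁ h₂
    exact exists_homeomorph_semiconj_shift hp hl hw hα hlw
end
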